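/- Let L be a function on the infinite jet space of a field u : ℝ² → ℝ and let Q be a function of the jet. Then the algebraic identity pr(Q∂_u)L = Q·(δL/δu) + D₁(J₁ + F₁) + D₂(J₂ + F₂) holds, where J₁ = ∑_{I: t₂∉I} (D_I Q)·(δL/δu_{It₁}) + (1/2)∑_I D₂((D_I Q)·(δL/δu_{It₁t₂})) − F₁ and J₂ = ∑_{I: t₁∉I} (D_I Q)·(δL/δu_{It₂}) + (1/2)∑_I D₁((D_I Q)·(δL/δu_{It₁t₂})) − F₂, for any functions F₁, F₂. Consequently, Q∂_u is a variational symmetry of L with flux (F₁,F₂) if and only if (J₁, J₂, Q) is a conservation law of L (Noether's theorem). -/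

import Mathlib

noncomputable section

/-- The fiber of the infinite jet bundle for a field `u : ℝ² → ℝ`: jet variables `u_I`
indexed by multi-indices `I ∈ ℕ²`. -/
abbrev Jet : Type := (ℕ × ℕ) → ℝ

/-- Partial derivative of a jet function with respect to the jet variable `u_I`. -/
def jpd (I : ℕ × ℕ) (L : Jet → ℝ) : Jet → ℝ :=
  fun z => deriv (fun s : ℝ => L (Function.update z I s)) (z I)

/-- Total derivative `D₁`: `D₁L = ∑_I u_{It₁} ∂L/∂u_I`. -/
def TD1 (L : Jet → ℝ) : Jet → ℝ :=
  fun z => ∑' I : ℕ × ℕ, z (I.1 + 1, I.2) * jpd I L z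

/-- Total derivative `D₂`: `D₂L = ∑_I u_{It₂} ∂L/∂u_I`. -/
def TD2 (L : Jet → ℝ) : Jet → ℝ :=
  fun z => ∑' I : ℕ × ℕ, z (I.1, I.2 + 1) * jpd I L z

/-- Iterated total derivative `D_I = D₁^{i₁} D₂^{i₂}`. -/
def DI (I : ℕ × ℕ) : (Jet → ℝ) → Jet → ℝ := TD1^[I.1] ∘ TD2^[I.2]

/-- Higher variational derivative
`δL/δu_I = ∑_{α,β≥0} (−1)^{α+β} D₁^α D₂^β (∂L/∂u_{I t₁^α t₂^β})`. -/
def varDer (I : ℕ × ℕ) (L : Jet → ℝ) : Jet → ℝ :=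
  fun z => ∑' p : ℕ × ℕ,
    (-1 : ℝ)^(p.1 + p.2) * DI p (jpd (I.1 + p.1, I.2 + p.2) L) z

/-- Prolongation: `pr(Q∂ᵤ)L = ∑_I (D_I Q) ∂L/∂u_I`. -/
def prol (Q L : Jet → ℝ) : Jet → ℝ :=
  fun z => ∑' I : ℕ × ℕ, DI I Q z * jpd I L z

/-- A jet function depending smoothly on finitely many jet variables. -/
def SmoothJetFun (L : Jet → ℝ) : Prop :=
  ∃ n : ℕ, ∃ G : (Fin n × Fin n → ℝ) → ℝ, ContDiff ℝ (⊤ : ℕ∞) G ∧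
    ∀ z : Jet, L z = G (fun p => z ((p.1 : ℕ), (p.2 : ℕ)))

/-- The first component of the Noether current:
`J₁ = ∑_{I: t₂∉I} (D_I Q)(δL/δu_{It₁}) + ½∑_I D₂((D_I Q)(δL/δu_{It₁t₂})) − F₁`. -/
def J1 (L Q F1 : Jet → ℝ) : Jet → ℝ := fun z =>
  (∑' a : ℕ, DI (a, 0) Q z * varDer (a + 1, 0) L z)
  + (1/2) * TD2 (fun w => ∑' I : ℕ × ℕ, DI I Q w * varDer (I.1 + 1, I.2 + 1) L w) z
  - F1 z

/-- The second component of the Noether current: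
`J₂ = ∑_{I: t₁∉I} (D_I Q)(δL/δu_{It₂}) + ½∑_I D₁((D_I Q)(δL/δu_{It₁t₂})) − F₂`. -/
def J2 (L Q F2 : Jet → ℝ) : Jet → ℝ := fun z =>
  (∑' b : ℕ, DI (0, b) Q z * varDer (0, b + 1) L z)
  + (1/2) * TD1 (fun w => ∑' I : ℕ × ℕ, DI I Q w * varDer (I.1 + 1, I.2 + 1) L w) z
  - F2 z

variable {ι : Type*} [Fintype ι] [DecidableEq ι]

def pdv (i : ι) (G : (ι → ℝ) → ℝ) : (ι → ℝ) → ℝ :=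
  fun x => fderiv ℝ G x (Pi.single i 1)

theorem pdv_eq_deriv {G : (ι → ℝ) → ℝ} (hG : ContDiff ℝ (⊤ : ℕ∞) G) (i : ι) (x : ι → ℝ) :
    deriv (fun t => G (Function.update x i t)) (x i) = pdv i G x := by
  have h1 : HasDerivAt (fun t => G (Function.update x i t))
      (fderiv ℝ G (Function.update x i (x i)) (Pi.single i 1)) (x i) :=
    (hG.differentiable (by simp) _).hasFDerivAt.comp_hasDerivAt _ (hasDerivAt_update x i (x i))
  rw [Function.update_eq_self] at h1
  exact h1.deriv

theorem pdv_contDiff {G : (ι → ℝ) → ℝ} (hG : ContDiff ℝ (⊤ : ℕ∞) G) (i : ι) :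
    ContDiff ℝ (⊤ : ℕ∞) (pdv i G) :=
  (hG.fderiv_right (by simp)).clm_apply contDiff_const

theorem pdv_comm {G : (ι → ℝ) → ℝ} (hG : ContDiff ℝ (⊤ : ℕ∞) G) (i j : ι) :
    pdv i (pdv j G) = pdv j (pdv i G) := by
  funext x
  have hd : ∀ y, HasFDerivAt G (fderiv ℝ G y) y :=
    fun y => (hG.differentiable (by simp) y).hasFDerivAt
  have h2 : HasFDerivAt (fderiv ℝ G) (fderiv ℝ (fderiv ℝ G) x) x :=
    ((hG.fderiv_right (m := (⊤ : ℕ∞)) (by simp)).differentiable (by simp) x).hasFDerivAt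
  have key : ∀ v w : ι → ℝ, fderiv ℝ (fderiv ℝ G) x v w = fderiv ℝ (fderiv ℝ G) x w v :=
    second_derivative_symmetric hd h2
  have expand : ∀ (k : ι) (v : ι → ℝ), pdv k (fun y => fderiv ℝ G y v) x
      = fderiv ℝ (fderiv ℝ G) x (Pi.single k 1) v := by
    intro k v
    have : HasFDerivAt (fun y => fderiv ℝ G y v)
        ((ContinuousLinearMap.apply ℝ ℝ v).comp (fderiv ℝ (fderiv ℝ G) x)) x :=
      (ContinuousLinearMap.apply ℝ ℝ v).hasFDerivAt.comp x h2
    simp [pdv, this.fderiv]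
  calc pdv i (pdv j G) x = fderiv ℝ (fderiv ℝ G) x (Pi.single i 1) (Pi.single j 1) := expand _ _
    _ = fderiv ℝ (fderiv ℝ G) x (Pi.single j 1) (Pi.single i 1) := key _ _
    _ = pdv j (pdv i G) x := (expand _ _).symm

def Cyl (n : ℕ) (f : Jet → ℝ) : Prop :=
  ∃ G : (Fin n × Fin n → ℝ) → ℝ, ContDiff ℝ (⊤ : ℕ∞) G ∧
    ∀ z : Jet, f z = G (fun p => z ((p.1 : ℕ), (p.2 : ℕ)))

theorem smoothJetFun_iff {f : Jet → ℝ} : SmoothJetFun f ↔ ∃ n, Cyl n f := Iff.rfl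

/-- restriction of a jet to the `n`-window -/
def res (n : ℕ) (z : Jet) : Fin n × Fin n → ℝ := fun p => z ((p.1 : ℕ), (p.2 : ℕ))

theorem res_update_mem (n : ℕ) (z : Jet) {a b : ℕ} (ha : a < n) (hb : b < n) (s : ℝ) :
    res n (Function.update z (a, b) s)
      = Function.update (res n z) (⟨a, ha⟩, ⟨b, hb⟩) s := by
  funext p
  rcases p with ⟨⟨a', ha'⟩, ⟨b', hb'⟩⟩
  by_cases h : a' = a ∧ b' = b
  · obtain ⟨rfl, rfl⟩ := h
    show Function.update z (a', b') s (a', b') = _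
    rw [Function.update_self, Function.update_self]
  · have h1 : ((a' : ℕ), (b' : ℕ)) ≠ (a, b) := by
      simp only [ne_eq, Prod.mk.injEq]; tauto
    have h2 : ((⟨a', ha'⟩ : Fin n), (⟨b', hb'⟩ : Fin n)) ≠ (⟨a, ha⟩, ⟨b, hb⟩) := by
      simp only [ne_eq, Prod.mk.injEq, Fin.mk.injEq]; tauto
    show Function.update z (a, b) s (a', b') = _
    rw [Function.update_of_ne h1, Function.update_of_ne h2]
    rfl

theorem res_update_out (n : ℕ) (z : Jet) {I : ℕ × ℕ} (h : n ≤ I.1 ∨ n ≤ I.2) (s : ℝ) :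
    res n (Function.update z I s) = res n z := by
  funext p
  have hne : ((p.1 : ℕ), (p.2 : ℕ)) ≠ I := by
    intro hc
    subst hc
    rcases h with h | h
    · exact absurd p.1.isLt (by simpa using Nat.not_lt.mpr h)
    · exact absurd p.2.isLt (by simpa using Nat.not_lt.mpr h)
  exact Function.update_of_ne hne s z

theorem Cyl.mono {f : Jet → ℝ} {n m : ℕ} (h : Cyl n f) (hnm : n ≤ m) : Cyl m f := by
  obtain ⟨G, hG, hfG⟩ := h
  refine ⟨fun x => G (fun p => x (Fin.castLE hnm p.1, Fin.castLE hnm p.2)), ?_, ?_⟩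
  · exact hG.comp (contDiff_pi.2 fun p => contDiff_apply ℝ ℝ _)
  · intro z; rw [hfG]; rfl

theorem cyl_const (n : ℕ) (c : ℝ) : Cyl n (fun _ => c) :=
  ⟨fun _ => c, contDiff_const, fun _ => rfl⟩

theorem Cyl.add {f g : Jet → ℝ} {n : ℕ} (hf : Cyl n f) (hg : Cyl n g) :
    Cyl n (fun z => f z + g z) := by
  obtain ⟨G, hG, hfG⟩ := hf; obtain ⟨H, hH, hgH⟩ := hg
  exact ⟨fun x => G x + H x, hG.add hH, fun z => by simp only []; rw [hfG, hgH]⟩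

theorem Cyl.mul {f g : Jet → ℝ} {n : ℕ} (hf : Cyl n f) (hg : Cyl n g) :
    Cyl n (fun z => f z * g z) := by
  obtain ⟨G, hG, hfG⟩ := hf; obtain ⟨H, hH, hgH⟩ := hg
  exact ⟨fun x => G x * H x, hG.mul hH, fun z => by simp only []; rw [hfG, hgH]⟩

theorem Cyl.const_mul {f : Jet → ℝ} {n : ℕ} (c : ℝ) (hf : Cyl n f) :
    Cyl n (fun z => c * f z) := (cyl_const n c).mul hf

theorem cyl_coord {n : ℕ} {a b : ℕ} (ha : a < n) (hb : b < n) :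
    Cyl n (fun z => z (a, b)) :=
  ⟨fun x => x (⟨a, ha⟩, ⟨b, hb⟩), contDiff_apply ℝ ℝ _, fun _ => rfl⟩

theorem Cyl.sum {α : Type*} {s : Finset α} {f : α → Jet → ℝ} {n : ℕ}
    (h : ∀ i ∈ s, Cyl n (f i)) : Cyl n (fun z => ∑ i ∈ s, f i z) := by
  classical
  induction s using Finset.induction_on with
  | empty => simpa using cyl_const n 0
  | @insert x s' hx ih =>
      have : Cyl n (fun z => f x z + ∑ i ∈ s', f i z) :=
        (h x (Finset.mem_insert_self _ _)).add
          (ih fun i hi => h i (Finset.mem_insert_of_mem hi))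
      simpa [Finset.sum_insert hx] using this

/-! jpd lemmas -/

theorem jpd_rep {f : Jet → ℝ} {n : ℕ} {G : (Fin n × Fin n → ℝ) → ℝ}
    (hG : ContDiff ℝ (⊤ : ℕ∞) G) (hfG : ∀ z, f z = G (fun p => z ((p.1 : ℕ), (p.2 : ℕ))))
    {a b : ℕ} (ha : a < n) (hb : b < n) :
    jpd (a, b) f = fun z => pdv (⟨a, ha⟩, ⟨b, hb⟩) G (res n z) := by
  funext z
  have h1 : (fun s => f (Function.update z (a, b) s))
      = fun s => G (Function.update (res n z) (⟨a, ha⟩, ⟨b, hb⟩) s) := by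
    funext s
    rw [hfG]
    show G (res n (Function.update z (a, b) s)) = _
    rw [res_update_mem n z ha hb]
  have h2 : z (a, b) = res n z (⟨a, ha⟩, ⟨b, hb⟩) := rfl
  rw [jpd, h1, h2, pdv_eq_deriv hG]

theorem Cyl.jpd_out {f : Jet → ℝ} {n : ℕ} (h : Cyl n f) {I : ℕ × ℕ}
    (hI : n ≤ I.1 ∨ n ≤ I.2) : jpd I f = fun _ => 0 := by
  obtain ⟨G, hG, hfG⟩ := h
  funext z
  have h1 : (fun s => f (Function.update z I s)) = fun _ => f z := by
    funext s
    rw [hfG, hfG]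
    show G (res n (Function.update z I s)) = G (res n z)
    rw [res_update_out n z hI]
  rw [jpd, h1, deriv_const]

theorem Cyl.jpd {f : Jet → ℝ} {n : ℕ} (h : Cyl n f) (I : ℕ × ℕ) : Cyl n (jpd I f) := by
  by_cases hI : I.1 < n ∧ I.2 < n
  · obtain ⟨G, hG, hfG⟩ := h
    obtain ⟨a, b⟩ := I
    rw [jpd_rep hG hfG hI.1 hI.2]
    exact ⟨pdv _ G, pdv_contDiff hG _, fun _ => rfl⟩
  · rw [h.jpd_out (by omega)]
    exact cyl_const n 0

theorem Cyl.diffAt {f : Jet → ℝ} {n : ℕ} (h : Cyl n f) (z : Jet) (I : ℕ × ℕ) :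
    DifferentiableAt ℝ (fun s => f (Function.update z I s)) (z I) := by
  obtain ⟨G, hG, hfG⟩ := h
  by_cases hI : I.1 < n ∧ I.2 < n
  · obtain ⟨a, b⟩ := I
    have h1 : (fun s => f (Function.update z (a, b) s))
        = fun s => G (Function.update (res n z) (⟨a, hI.1⟩, ⟨b, hI.2⟩) s) := by
      funext s
      rw [hfG]
      show G (res n (Function.update z (a, b) s)) = _
      rw [res_update_mem n z hI.1 hI.2]
    rw [h1]
    exact DifferentiableAt.comp _ (hG.differentiable (by simp) _)
      (hasDerivAt_update _ _ _).differentiableAt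
  · have h1 : (fun s => f (Function.update z I s)) = fun _ => f z := by
      funext s
      rw [hfG, hfG]
      show G (res n (Function.update z I s)) = G (res n z)
      rw [res_update_out n z (by omega)]
    rw [h1]
    exact differentiableAt_const _

theorem SmoothJetFun.diffAt {f : Jet → ℝ} (h : SmoothJetFun f) (z : Jet) (I : ℕ × ℕ) :
    DifferentiableAt ℝ (fun s => f (Function.update z I s)) (z I) := by
  obtain ⟨n, G, hG, hfG⟩ := h
  exact Cyl.diffAt ⟨G, hG, hfG⟩ z I

theorem jpd_add {f g : Jet → ℝ} (hf : SmoothJetFun f) (hg : SmoothJetFun g) (I : ℕ × ℕ) :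
    jpd I (fun z => f z + g z) = fun z => jpd I f z + jpd I g z := by
  funext z
  exact deriv_add (hf.diffAt z I) (hg.diffAt z I)

theorem jpd_const_mul {f : Jet → ℝ} (hf : SmoothJetFun f) (c : ℝ) (I : ℕ × ℕ) :
    jpd I (fun z => c * f z) = fun z => c * jpd I f z := by
  funext z
  exact deriv_const_mul c (hf.diffAt z I)

theorem jpd_mul {f g : Jet → ℝ} (hf : SmoothJetFun f) (hg : SmoothJetFun g) (I : ℕ × ℕ) :
    jpd I (fun z => f z * g z) = fun z => jpd I f z * g z + f z * jpd I g z := by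
  funext z
  have := deriv_fun_mul (hf.diffAt z I) (hg.diffAt z I)
  simpa [jpd, Function.update_eq_self] using this

theorem jpd_zero_fn (I : ℕ × ℕ) : jpd I (fun _ => (0 : ℝ)) = fun _ => 0 := by
  funext z; simp [jpd]

theorem jpd_coord (I K : ℕ × ℕ) :
    jpd I (fun z => z K) = fun _ => if I = K then 1 else 0 := by
  funext z
  by_cases h : I = K
  · subst h
    have : (fun s => Function.update z I s I) = fun s => s := by
      funext s; rw [Function.update_self]
    simp [jpd, this]
  · have : (fun s => Function.update z I s K) = fun _ => z K := by
      funext s; rw [Function.update_of_ne (Ne.symm h)]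
    simp [jpd, this, h]

/-! window Finset -/

def BW (n : ℕ) : Finset (ℕ × ℕ) := Finset.range n ×ˢ Finset.range n

theorem mem_BW {n : ℕ} {I : ℕ × ℕ} : I ∈ BW n ↔ I.1 < n ∧ I.2 < n := by
  simp [BW, Finset.mem_product]

theorem TD1_eq_sum {f : Jet → ℝ} {n : ℕ} (h : Cyl n f) {m : ℕ} (hm : n ≤ m) (z : Jet) :
    TD1 f z = ∑ I ∈ BW m, z (I.1 + 1, I.2) * jpd I f z := by
  refine tsum_eq_sum ?_
  intro I hI
  have : n ≤ I.1 ∨ n ≤ I.2 := by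
    rw [mem_BW] at hI; omega
  rw [h.jpd_out this]
  ring

theorem TD2_eq_sum {f : Jet → ℝ} {n : ℕ} (h : Cyl n f) {m : ℕ} (hm : n ≤ m) (z : Jet) :
    TD2 f z = ∑ I ∈ BW m, z (I.1, I.2 + 1) * jpd I f z := by
  refine tsum_eq_sum ?_
  intro I hI
  have : n ≤ I.1 ∨ n ≤ I.2 := by
    rw [mem_BW] at hI; omega
  rw [h.jpd_out this]
  ring

theorem Cyl.td1 {f : Jet → ℝ} {n : ℕ} (h : Cyl n f) : Cyl (n + 1) (TD1 f) := by
  have heq : TD1 f = fun z => ∑ I ∈ BW n, z (I.1 + 1, I.2) * _root_.jpd I f z := by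
    funext z; exact TD1_eq_sum h le_rfl z
  rw [heq]
  refine Cyl.sum fun I hI => ?_
  rw [mem_BW] at hI
  exact Cyl.mul (cyl_coord (by omega) (by omega)) (Cyl.mono (Cyl.jpd h I) (Nat.le_succ n))

theorem Cyl.td2 {f : Jet → ℝ} {n : ℕ} (h : Cyl n f) : Cyl (n + 1) (TD2 f) := by
  have heq : TD2 f = fun z => ∑ I ∈ BW n, z (I.1, I.2 + 1) * _root_.jpd I f z := by
    funext z; exact TD2_eq_sum h le_rfl z
  rw [heq]
  refine Cyl.sum fun I hI => ?_
  rw [mem_BW] at hI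
  exact Cyl.mul (cyl_coord (by omega) (by omega)) (Cyl.mono (Cyl.jpd h I) (Nat.le_succ n))

theorem SmoothJetFun.td1 {f : Jet → ℝ} (h : SmoothJetFun f) : SmoothJetFun (TD1 f) := by
  obtain ⟨n, hn⟩ := smoothJetFun_iff.mp h
  exact smoothJetFun_iff.mpr ⟨n + 1, hn.td1⟩

theorem SmoothJetFun.td2 {f : Jet → ℝ} (h : SmoothJetFun f) : SmoothJetFun (TD2 f) := by
  obtain ⟨n, hn⟩ := smoothJetFun_iff.mp h
  exact smoothJetFun_iff.mpr ⟨n + 1, hn.td2⟩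

theorem sm_const (c : ℝ) : SmoothJetFun (fun _ => c) := smoothJetFun_iff.mpr ⟨0, cyl_const 0 c⟩

theorem SmoothJetFun.add {f g : Jet → ℝ} (hf : SmoothJetFun f) (hg : SmoothJetFun g) :
    SmoothJetFun (fun z => f z + g z) := by
  obtain ⟨n, hn⟩ := smoothJetFun_iff.mp hf; obtain ⟨m, hm⟩ := smoothJetFun_iff.mp hg
  exact smoothJetFun_iff.mpr ⟨max n m, (hn.mono (le_max_left _ _)).add (hm.mono (le_max_right _ _))⟩

theorem SmoothJetFun.mul {f g : Jet → ℝ} (hf : SmoothJetFun f) (hg : SmoothJetFun g) :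
    SmoothJetFun (fun z => f z * g z) := by
  obtain ⟨n, hn⟩ := smoothJetFun_iff.mp hf; obtain ⟨m, hm⟩ := smoothJetFun_iff.mp hg
  exact smoothJetFun_iff.mpr ⟨max n m, (hn.mono (le_max_left _ _)).mul (hm.mono (le_max_right _ _))⟩

theorem SmoothJetFun.const_mul {f : Jet → ℝ} (c : ℝ) (hf : SmoothJetFun f) :
    SmoothJetFun (fun z => c * f z) := (sm_const c).mul hf

theorem sm_sum {α : Type*} {s : Finset α} {f : α → Jet → ℝ}
    (h : ∀ i ∈ s, SmoothJetFun (f i)) : SmoothJetFun (fun z => ∑ i ∈ s, f i z) := by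
  classical
  induction s using Finset.induction_on with
  | empty => simpa using sm_const 0
  | @insert x s' hx ih =>
      have : SmoothJetFun (fun z => f x z + ∑ i ∈ s', f i z) :=
        (h x (Finset.mem_insert_self _ _)).add
          (ih fun i hi => h i (Finset.mem_insert_of_mem hi))
      simpa [Finset.sum_insert hx] using this

theorem SmoothJetFun.jpd {f : Jet → ℝ} (h : SmoothJetFun f) (I : ℕ × ℕ) :
    SmoothJetFun (jpd I f) := by
  obtain ⟨n, hn⟩ := smoothJetFun_iff.mp h
  exact smoothJetFun_iff.mpr ⟨n, hn.jpd I⟩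

/-! linearity and Leibniz for TD1/TD2 -/

theorem TD1_zero : TD1 (fun _ => (0 : ℝ)) = fun _ => 0 := by
  funext z
  have : ∀ I : ℕ × ℕ, z (I.1 + 1, I.2) * jpd I (fun _ => (0:ℝ)) z = 0 := by
    intro I; rw [jpd_zero_fn]; ring
  simp only [TD1]
  rw [tsum_congr this, tsum_zero]

theorem TD2_zero : TD2 (fun _ => (0 : ℝ)) = fun _ => 0 := by
  funext z
  have : ∀ I : ℕ × ℕ, z (I.1, I.2 + 1) * jpd I (fun _ => (0:ℝ)) z = 0 := by
    intro I; rw [jpd_zero_fn]; ring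
  simp only [TD2]
  rw [tsum_congr this, tsum_zero]

theorem TD1_add {f g : Jet → ℝ} (hf : SmoothJetFun f) (hg : SmoothJetFun g) :
    TD1 (fun z => f z + g z) = fun z => TD1 f z + TD1 g z := by
  obtain ⟨n, hn⟩ := smoothJetFun_iff.mp hf; obtain ⟨m, hm⟩ := smoothJetFun_iff.mp hg
  funext z
  set k := max n m
  have hfk := hn.mono (le_max_left n m)
  have hgk := hm.mono (le_max_right n m)
  rw [TD1_eq_sum (hfk.add hgk) (le_refl k) z, TD1_eq_sum hfk (le_refl k) z,
    TD1_eq_sum hgk (le_refl k) z, ← Finset.sum_add_distrib]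
  refine Finset.sum_congr rfl fun I _ => ?_
  rw [jpd_add (smoothJetFun_iff.mpr ⟨k, hfk⟩) (smoothJetFun_iff.mpr ⟨k, hgk⟩)]
  ring

theorem TD2_add {f g : Jet → ℝ} (hf : SmoothJetFun f) (hg : SmoothJetFun g) :
    TD2 (fun z => f z + g z) = fun z => TD2 f z + TD2 g z := by
  obtain ⟨n, hn⟩ := smoothJetFun_iff.mp hf; obtain ⟨m, hm⟩ := smoothJetFun_iff.mp hg
  funext z
  set k := max n m
  have hfk := hn.mono (le_max_left n m)
  have hgk := hm.mono (le_max_right n m)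
  rw [TD2_eq_sum (hfk.add hgk) (le_refl k) z, TD2_eq_sum hfk (le_refl k) z,
    TD2_eq_sum hgk (le_refl k) z, ← Finset.sum_add_distrib]
  refine Finset.sum_congr rfl fun I _ => ?_
  rw [jpd_add (smoothJetFun_iff.mpr ⟨k, hfk⟩) (smoothJetFun_iff.mpr ⟨k, hgk⟩)]
  ring

theorem TD1_const_mul {f : Jet → ℝ} (c : ℝ) (hf : SmoothJetFun f) :
    TD1 (fun z => c * f z) = fun z => c * TD1 f z := by
  obtain ⟨n, hn⟩ := smoothJetFun_iff.mp hf
  funext z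
  rw [TD1_eq_sum (hn.const_mul c) (le_refl n) z, TD1_eq_sum hn (le_refl n) z,
    Finset.mul_sum]
  refine Finset.sum_congr rfl fun I _ => ?_
  rw [jpd_const_mul (smoothJetFun_iff.mpr ⟨n, hn⟩)]
  ring

theorem TD2_const_mul {f : Jet → ℝ} (c : ℝ) (hf : SmoothJetFun f) :
    TD2 (fun z => c * f z) = fun z => c * TD2 f z := by
  obtain ⟨n, hn⟩ := smoothJetFun_iff.mp hf
  funext z
  rw [TD2_eq_sum (hn.const_mul c) (le_refl n) z, TD2_eq_sum hn (le_refl n) z,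
    Finset.mul_sum]
  refine Finset.sum_congr rfl fun I _ => ?_
  rw [jpd_const_mul (smoothJetFun_iff.mpr ⟨n, hn⟩)]
  ring

theorem TD1_mul {f g : Jet → ℝ} (hf : SmoothJetFun f) (hg : SmoothJetFun g) :
    TD1 (fun z => f z * g z) = fun z => TD1 f z * g z + f z * TD1 g z := by
  obtain ⟨n, hn⟩ := smoothJetFun_iff.mp hf; obtain ⟨m, hm⟩ := smoothJetFun_iff.mp hg
  funext z
  set k := max n m
  have hfk := hn.mono (le_max_left n m)
  have hgk := hm.mono (le_max_right n m)
  rw [TD1_eq_sum (hfk.mul hgk) (le_refl k) z, TD1_eq_sum hfk (le_refl k) z,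
    TD1_eq_sum hgk (le_refl k) z, Finset.sum_mul, Finset.mul_sum, ← Finset.sum_add_distrib]
  refine Finset.sum_congr rfl fun I _ => ?_
  rw [jpd_mul (smoothJetFun_iff.mpr ⟨k, hfk⟩) (smoothJetFun_iff.mpr ⟨k, hgk⟩)]
  ring

theorem TD2_mul {f g : Jet → ℝ} (hf : SmoothJetFun f) (hg : SmoothJetFun g) :
    TD2 (fun z => f z * g z) = fun z => TD2 f z * g z + f z * TD2 g z := by
  obtain ⟨n, hn⟩ := smoothJetFun_iff.mp hf; obtain ⟨m, hm⟩ := smoothJetFun_iff.mp hg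
  funext z
  set k := max n m
  have hfk := hn.mono (le_max_left n m)
  have hgk := hm.mono (le_max_right n m)
  rw [TD2_eq_sum (hfk.mul hgk) (le_refl k) z, TD2_eq_sum hfk (le_refl k) z,
    TD2_eq_sum hgk (le_refl k) z, Finset.sum_mul, Finset.mul_sum, ← Finset.sum_add_distrib]
  refine Finset.sum_congr rfl fun I _ => ?_
  rw [jpd_mul (smoothJetFun_iff.mpr ⟨k, hfk⟩) (smoothJetFun_iff.mpr ⟨k, hgk⟩)]
  ring

theorem TD1_sum {α : Type*} {s : Finset α} {f : α → Jet → ℝ}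
    (h : ∀ i ∈ s, SmoothJetFun (f i)) :
    TD1 (fun z => ∑ i ∈ s, f i z) = fun z => ∑ i ∈ s, TD1 (f i) z := by
  classical
  induction s using Finset.induction_on with
  | empty => simpa using TD1_zero
  | @insert x s' hx ih =>
      have h1 : (fun z => ∑ i ∈ insert x s', f i z)
          = fun z => f x z + ∑ i ∈ s', f i z := by
        funext z; rw [Finset.sum_insert hx]
      rw [h1, TD1_add (h x (Finset.mem_insert_self _ _))
        (sm_sum fun i hi => h i (Finset.mem_insert_of_mem hi)),
        ih fun i hi => h i (Finset.mem_insert_of_mem hi)]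
      funext z
      rw [Finset.sum_insert hx]

theorem TD2_sum {α : Type*} {s : Finset α} {f : α → Jet → ℝ}
    (h : ∀ i ∈ s, SmoothJetFun (f i)) :
    TD2 (fun z => ∑ i ∈ s, f i z) = fun z => ∑ i ∈ s, TD2 (f i) z := by
  classical
  induction s using Finset.induction_on with
  | empty => simpa using TD2_zero
  | @insert x s' hx ih =>
      have h1 : (fun z => ∑ i ∈ insert x s', f i z)
          = fun z => f x z + ∑ i ∈ s', f i z := by
        funext z; rw [Finset.sum_insert hx]
      rw [h1, TD2_add (h x (Finset.mem_insert_self _ _))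
        (sm_sum fun i hi => h i (Finset.mem_insert_of_mem hi)),
        ih fun i hi => h i (Finset.mem_insert_of_mem hi)]
      funext z
      rw [Finset.sum_insert hx]

/-! Clairaut at jet level -/

theorem jpd_comm {f : Jet → ℝ} (hf : SmoothJetFun f) (I J : ℕ × ℕ) :
    jpd I (jpd J f) = jpd J (jpd I f) := by
  obtain ⟨n, hn⟩ := smoothJetFun_iff.mp hf
  by_cases hI : I.1 < n ∧ I.2 < n
  · by_cases hJ : J.1 < n ∧ J.2 < n
    · obtain ⟨G, hG, hfG⟩ := hn
      obtain ⟨a, b⟩ := I; obtain ⟨c, d⟩ := J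
      simp only at hI hJ
      have hJrep := jpd_rep hG hfG hJ.1 hJ.2
      have hIrep := jpd_rep hG hfG hI.1 hI.2
      have e1 : jpd (a, b) (fun z => pdv (⟨c, hJ.1⟩, ⟨d, hJ.2⟩) G (res n z))
          = fun z => pdv (⟨a, hI.1⟩, ⟨b, hI.2⟩) (pdv (⟨c, hJ.1⟩, ⟨d, hJ.2⟩) G) (res n z) :=
        jpd_rep (pdv_contDiff hG _) (fun _ => rfl) hI.1 hI.2
      have e2 : jpd (c, d) (fun z => pdv (⟨a, hI.1⟩, ⟨b, hI.2⟩) G (res n z))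
          = fun z => pdv (⟨c, hJ.1⟩, ⟨d, hJ.2⟩) (pdv (⟨a, hI.1⟩, ⟨b, hI.2⟩) G) (res n z) :=
        jpd_rep (pdv_contDiff hG _) (fun _ => rfl) hJ.1 hJ.2
      rw [hJrep, hIrep, e1, e2]
      funext z
      rw [pdv_comm hG]
    · have h1 : jpd J f = fun _ => 0 := hn.jpd_out (by omega)
      have h2 : jpd J (jpd I f) = fun _ => 0 := (hn.jpd I).jpd_out (by omega)
      rw [h1, h2, jpd_zero_fn]
  · have h1 : jpd I f = fun _ => 0 := hn.jpd_out (by omega)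
    have h2 : jpd I (jpd J f) = fun _ => 0 := (hn.jpd J).jpd_out (by omega)
    rw [h1, h2, jpd_zero_fn]

theorem sm_coord (K : ℕ × ℕ) : SmoothJetFun (fun z => z K) :=
  smoothJetFun_iff.mpr ⟨max K.1 K.2 + 1, cyl_coord (by omega) (by omega)⟩

theorem TD12_comm {f : Jet → ℝ} (hf : SmoothJetFun f) : TD1 (TD2 f) = TD2 (TD1 f) := by
  obtain ⟨n, hn⟩ := smoothJetFun_iff.mp hf
  have smf : SmoothJetFun f := hf
  -- expansion lemma
  have expand : ∀ z : Jet,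
      TD1 (TD2 f) z
        = (∑ J ∈ BW n, z (J.1 + 1, J.2 + 1) * jpd J f z)
          + ∑ I ∈ BW n, ∑ J ∈ BW n,
              z (I.1 + 1, I.2) * (z (J.1, J.2 + 1) * jpd I (jpd J f) z) := by
    intro z
    have h2fun : TD2 f = fun w => ∑ J ∈ BW n, w (J.1, J.2 + 1) * jpd J f w := by
      funext w; exact TD2_eq_sum hn le_rfl w
    rw [TD1_eq_sum hn.td2 le_rfl z]
    have hterm : ∀ I ∈ BW (n + 1),
        z (I.1 + 1, I.2) * jpd I (TD2 f) z
          = z (I.1 + 1, I.2) * ∑ J ∈ BW n,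
              ((if I = (J.1, J.2 + 1) then 1 else 0) * jpd J f z
                + z (J.1, J.2 + 1) * jpd I (jpd J f) z) := by
      intro I _
      congr 1
      have : jpd I (TD2 f) = jpd I (fun w => ∑ J ∈ BW n, w (J.1, J.2 + 1) * jpd J f w) := by
        rw [← h2fun]
      rw [this]
      have hsummand : ∀ J ∈ BW n, SmoothJetFun (fun w => w (J.1, J.2 + 1) * jpd J f w) :=
        fun J _ => (sm_coord _).mul (smf.jpd J)
      have hsum : jpd I (fun w => ∑ J ∈ BW n, w (J.1, J.2 + 1) * jpd J f w)
          = fun w => ∑ J ∈ BW n, jpd I (fun w' => w' (J.1, J.2 + 1) * jpd J f w') w := by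
        classical
        induction (BW n) using Finset.induction_on with
        | empty => simp [jpd_zero_fn]
        | @insert x s' hx ih =>
            have h1 : (fun w => ∑ J ∈ insert x s', w (J.1, J.2 + 1) * jpd J f w)
                = fun w => (fun w' => w' (x.1, x.2 + 1) * jpd x f w') w
                  + ∑ J ∈ s', w (J.1, J.2 + 1) * jpd J f w := by
              funext w; rw [Finset.sum_insert hx]
            rw [h1, jpd_add ((sm_coord _).mul (smf.jpd x))
              (sm_sum fun J _ => (sm_coord _).mul (smf.jpd J)), ih]
            funext w
            rw [Finset.sum_insert hx]
        
      rw [hsum]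
      refine Finset.sum_congr rfl fun J _ => ?_
      rw [jpd_mul (sm_coord _) (smf.jpd J), jpd_coord]
    rw [Finset.sum_congr rfl hterm]
    have split : ∀ I : ℕ × ℕ,
        z (I.1 + 1, I.2) * ∑ J ∈ BW n,
            ((if I = (J.1, J.2 + 1) then 1 else 0) * jpd J f z
              + z (J.1, J.2 + 1) * jpd I (jpd J f) z)
        = (∑ J ∈ BW n, z (I.1 + 1, I.2) * (if I = (J.1, J.2 + 1) then 1 else 0) * jpd J f z)
          + ∑ J ∈ BW n, z (I.1 + 1, I.2) * (z (J.1, J.2 + 1) * jpd I (jpd J f) z) := by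
      intro I
      rw [Finset.mul_sum, ← Finset.sum_add_distrib]
      refine Finset.sum_congr rfl fun J _ => by ring
    rw [Finset.sum_congr rfl fun I _ => split I, Finset.sum_add_distrib]
    congr 1
    · -- delta part
      rw [Finset.sum_comm]
      have inner : ∀ J ∈ BW n,
          (∑ I ∈ BW (n + 1), z (I.1 + 1, I.2) * (if I = (J.1, J.2 + 1) then 1 else 0)
            * jpd J f z)
          = z (J.1 + 1, J.2 + 1) * jpd J f z := by
        intro J hJ
        rw [mem_BW] at hJ
        have hmem : ((J.1, J.2 + 1) : ℕ × ℕ) ∈ BW (n + 1) := by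
          rw [mem_BW]; constructor <;> omega
        rw [Finset.sum_eq_single (J.1, J.2 + 1)]
        · simp
        · intro I _ hne
          simp [hne]
        · intro habs; exact absurd hmem habs
      exact Finset.sum_congr rfl inner
    · -- second part : shrink range from BW (n+1) to BW n
      symm
      refine Finset.sum_subset ?_ ?_
      · intro I hI
        rw [mem_BW] at hI ⊢
        omega
      · intro I _ hI
        rw [mem_BW] at hI
        refine Finset.sum_eq_zero fun J _ => ?_
        have : jpd I (jpd J f) = fun _ => 0 := (hn.jpd J).jpd_out (by omega)
        rw [this]
        ring
  have expand2 : ∀ z : Jet,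
      TD2 (TD1 f) z
        = (∑ J ∈ BW n, z (J.1 + 1, J.2 + 1) * jpd J f z)
          + ∑ I ∈ BW n, ∑ J ∈ BW n,
              z (I.1, I.2 + 1) * (z (J.1 + 1, J.2) * jpd I (jpd J f) z) := by
    intro z
    have h2fun : TD1 f = fun w => ∑ J ∈ BW n, w (J.1 + 1, J.2) * jpd J f w := by
      funext w; exact TD1_eq_sum hn le_rfl w
    rw [TD2_eq_sum hn.td1 le_rfl z]
    have hterm : ∀ I ∈ BW (n + 1),
        z (I.1, I.2 + 1) * jpd I (TD1 f) z
          = z (I.1, I.2 + 1) * ∑ J ∈ BW n,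
              ((if I = (J.1 + 1, J.2) then 1 else 0) * jpd J f z
                + z (J.1 + 1, J.2) * jpd I (jpd J f) z) := by
      intro I _
      congr 1
      have : jpd I (TD1 f) = jpd I (fun w => ∑ J ∈ BW n, w (J.1 + 1, J.2) * jpd J f w) := by
        rw [← h2fun]
      rw [this]
      have hsum : jpd I (fun w => ∑ J ∈ BW n, w (J.1 + 1, J.2) * jpd J f w)
          = fun w => ∑ J ∈ BW n, jpd I (fun w' => w' (J.1 + 1, J.2) * jpd J f w') w := by
        classical
        induction (BW n) using Finset.induction_on with
        | empty => simp [jpd_zero_fn]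
        | @insert x s' hx ih =>
            have h1 : (fun w => ∑ J ∈ insert x s', w (J.1 + 1, J.2) * jpd J f w)
                = fun w => (fun w' => w' (x.1 + 1, x.2) * jpd x f w') w
                  + ∑ J ∈ s', w (J.1 + 1, J.2) * jpd J f w := by
              funext w; rw [Finset.sum_insert hx]
            rw [h1, jpd_add ((sm_coord _).mul (smf.jpd x))
              (sm_sum fun J _ => (sm_coord _).mul (smf.jpd J)), ih]
            funext w
            rw [Finset.sum_insert hx]
      rw [hsum]
      refine Finset.sum_congr rfl fun J _ => ?_
      rw [jpd_mul (sm_coord _) (smf.jpd J), jpd_coord]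
    rw [Finset.sum_congr rfl hterm]
    have split : ∀ I : ℕ × ℕ,
        z (I.1, I.2 + 1) * ∑ J ∈ BW n,
            ((if I = (J.1 + 1, J.2) then 1 else 0) * jpd J f z
              + z (J.1 + 1, J.2) * jpd I (jpd J f) z)
        = (∑ J ∈ BW n, z (I.1, I.2 + 1) * (if I = (J.1 + 1, J.2) then 1 else 0) * jpd J f z)
          + ∑ J ∈ BW n, z (I.1, I.2 + 1) * (z (J.1 + 1, J.2) * jpd I (jpd J f) z) := by
      intro I
      rw [Finset.mul_sum, ← Finset.sum_add_distrib]
      refine Finset.sum_congr rfl fun J _ => by ring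
    rw [Finset.sum_congr rfl fun I _ => split I, Finset.sum_add_distrib]
    congr 1
    · rw [Finset.sum_comm]
      have inner : ∀ J ∈ BW n,
          (∑ I ∈ BW (n + 1), z (I.1, I.2 + 1) * (if I = (J.1 + 1, J.2) then 1 else 0)
            * jpd J f z)
          = z (J.1 + 1, J.2 + 1) * jpd J f z := by
        intro J hJ
        rw [mem_BW] at hJ
        have hmem : ((J.1 + 1, J.2) : ℕ × ℕ) ∈ BW (n + 1) := by
          rw [mem_BW]; constructor <;> omega
        rw [Finset.sum_eq_single (J.1 + 1, J.2)]
        · simp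
        · intro I _ hne
          simp [hne]
        · intro habs; exact absurd hmem habs
      exact Finset.sum_congr rfl inner
    · symm
      refine Finset.sum_subset ?_ ?_
      · intro I hI
        rw [mem_BW] at hI ⊢
        omega
      · intro I _ hI
        rw [mem_BW] at hI
        refine Finset.sum_eq_zero fun J _ => ?_
        have : jpd I (jpd J f) = fun _ => 0 := (hn.jpd J).jpd_out (by omega)
        rw [this]
        ring
  funext z
  rw [expand z, expand2 z]
  congr 1
  rw [Finset.sum_comm]
  refine Finset.sum_congr rfl fun J _ => Finset.sum_congr rfl fun I _ => ?_
  rw [jpd_comm hf I J]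
  ring

/-! DI lemmas -/

theorem DI_zero_zero (f : Jet → ℝ) : DI (0, 0) f = f := rfl

theorem DI_succ1 (a b : ℕ) (f : Jet → ℝ) : DI (a + 1, b) f = TD1 (DI (a, b) f) := by
  show TD1^[a + 1] (TD2^[b] f) = TD1 (TD1^[a] (TD2^[b] f))
  rw [Function.iterate_succ_apply']

theorem DI_zero_fn (p : ℕ × ℕ) : DI p (fun _ => (0 : ℝ)) = fun _ => 0 := by
  obtain ⟨a, b⟩ := p
  show TD1^[a] (TD2^[b] (fun _ => (0:ℝ))) = fun _ => 0
  have h2 : TD2^[b] (fun _ => (0:ℝ)) = fun _ => 0 := by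
    induction b with
    | zero => rfl
    | succ b ih => rw [Function.iterate_succ_apply', ih, TD2_zero]
  rw [h2]
  induction a with
  | zero => rfl
  | succ a ih => rw [Function.iterate_succ_apply', ih, TD1_zero]

theorem sm_iter_td1 {f : Jet → ℝ} (hf : SmoothJetFun f) (a : ℕ) :
    SmoothJetFun (TD1^[a] f) := by
  induction a with
  | zero => exact hf
  | succ a ih => rw [Function.iterate_succ_apply']; exact ih.td1

theorem sm_iter_td2 {f : Jet → ℝ} (hf : SmoothJetFun f) (b : ℕ) :
    SmoothJetFun (TD2^[b] f) := by
  induction b with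
  | zero => exact hf
  | succ b ih => rw [Function.iterate_succ_apply']; exact ih.td2

theorem SmoothJetFun.di {f : Jet → ℝ} (hf : SmoothJetFun f) (p : ℕ × ℕ) :
    SmoothJetFun (DI p f) := by
  obtain ⟨a, b⟩ := p
  exact sm_iter_td1 (sm_iter_td2 hf b) a

theorem iter_td1_td2_comm {f : Jet → ℝ} (hf : SmoothJetFun f) (a : ℕ) :
    TD1^[a] (TD2 f) = TD2 (TD1^[a] f) := by
  induction a with
  | zero => rfl
  | succ a ih =>
      rw [Function.iterate_succ_apply', Function.iterate_succ_apply', ih,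
        TD12_comm (sm_iter_td1 hf a)]

theorem DI_succ2 {f : Jet → ℝ} (hf : SmoothJetFun f) (a b : ℕ) :
    DI (a, b + 1) f = TD2 (DI (a, b) f) := by
  show TD1^[a] (TD2^[b + 1] f) = TD2 (TD1^[a] (TD2^[b] f))
  rw [Function.iterate_succ_apply', iter_td1_td2_comm (sm_iter_td2 hf b) a]

/-! varDer lemmas -/

theorem varDer_eq_sum {L : Jet → ℝ} {n : ℕ} (hL : Cyl n L) {m : ℕ} (hm : n ≤ m)
    (I : ℕ × ℕ) (z : Jet) :
    varDer I L z = ∑ p ∈ BW m,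
      (-1 : ℝ)^(p.1 + p.2) * DI p (jpd (I.1 + p.1, I.2 + p.2) L) z := by
  refine tsum_eq_sum ?_
  intro p hp
  have h0 : n ≤ I.1 + p.1 ∨ n ≤ I.2 + p.2 := by
    rw [mem_BW] at hp; omega
  rw [hL.jpd_out h0, DI_zero_fn]
  ring

theorem varDer_out {L : Jet → ℝ} {n : ℕ} (hL : Cyl n L) {I : ℕ × ℕ}
    (hI : n ≤ I.1 ∨ n ≤ I.2) : varDer I L = fun _ => 0 := by
  funext z
  rw [varDer_eq_sum hL le_rfl I z]
  refine Finset.sum_eq_zero fun p _ => ?_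
  have h0 : n ≤ I.1 + p.1 ∨ n ≤ I.2 + p.2 := by omega
  rw [hL.jpd_out h0, DI_zero_fn]
  ring

theorem sm_varDer {L : Jet → ℝ} (hL : SmoothJetFun L) (I : ℕ × ℕ) :
    SmoothJetFun (varDer I L) := by
  obtain ⟨n, hn⟩ := smoothJetFun_iff.mp hL
  have : varDer I L = fun z => ∑ p ∈ BW n,
      (-1 : ℝ)^(p.1 + p.2) * DI p (jpd (I.1 + p.1, I.2 + p.2) L) z := by
    funext z; exact varDer_eq_sum hn le_rfl I z
  rw [this]
  exact sm_sum fun p _ => ((hL.jpd _).di p).const_mul _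

/-- shift lemma -/
theorem sum_shift {n : ℕ} {h : ℕ → ℝ} (h0 : h n = 0) :
    ∑ a ∈ Finset.range n, h a = h 0 + ∑ a ∈ Finset.range n, h (a + 1) := by
  have e1 : ∑ a ∈ Finset.range (n + 1), h a = (∑ a ∈ Finset.range n, h a) + h n :=
    Finset.sum_range_succ h n
  have e2 : ∑ a ∈ Finset.range (n + 1), h a
      = (∑ a ∈ Finset.range n, h (a + 1)) + h 0 := Finset.sum_range_succ' h n
  rw [h0, add_zero] at e1
  rw [← e1, e2]
  ring

theorem DI_zero_succ2 (b : ℕ) (f : Jet → ℝ) : DI (0, b + 1) f = TD2 (DI (0, b) f) := by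
  show TD2^[b + 1] f = TD2 (TD2^[b] f)
  rw [Function.iterate_succ_apply']

theorem keyK {L : Jet → ℝ} {n : ℕ} (hL : Cyl n L) (I : ℕ × ℕ) :
    jpd I L = fun z => varDer I L z + TD1 (varDer (I.1 + 1, I.2) L) z
      + TD2 (varDer (I.1, I.2 + 1) L) z
      + TD2 (TD1 (varDer (I.1 + 1, I.2 + 1) L)) z := by
  have smL : SmoothJetFun L := smoothJetFun_iff.mpr ⟨n, hL⟩
  set μ : (ℕ × ℕ) → Jet → ℝ :=
    fun J z => ∑ β ∈ Finset.range n, (-1 : ℝ)^β * DI (0, β) (jpd (J.1, J.2 + β) L) z with hμ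
  have smμ : ∀ J, SmoothJetFun (μ J) := fun J =>
    sm_sum fun β _ => ((smL.jpd _).di _).const_mul _
  -- Step 1
  have step1 : ∀ J : ℕ × ℕ, ∀ z : Jet,
      varDer J L z = μ J z - TD1 (varDer (J.1 + 1, J.2) L) z := by
    intro J z
    have hvd : varDer J L z = ∑ α ∈ Finset.range n, ∑ β ∈ Finset.range n,
        (-1 : ℝ)^(α + β) * DI (α, β) (jpd (J.1 + α, J.2 + β) L) z := by
      rw [varDer_eq_sum hL le_rfl J z, BW, Finset.sum_product]
    set h : ℕ → ℝ := fun α => ∑ β ∈ Finset.range n,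
      (-1 : ℝ)^(α + β) * DI (α, β) (jpd (J.1 + α, J.2 + β) L) z with hh
    have hn0 : h n = 0 := by
      refine Finset.sum_eq_zero fun β _ => ?_
      rw [hL.jpd_out (Or.inl (by omega)), DI_zero_fn]
      ring
    have hshift := sum_shift hn0
    have h0eq : h 0 = μ J z := by
      refine Finset.sum_congr rfl fun β _ => ?_
      simp
    have hTD1 : TD1 (varDer (J.1 + 1, J.2) L) z
        = ∑ α ∈ Finset.range n, ∑ β ∈ Finset.range n,
            (-1 : ℝ)^(α + β) * DI (α + 1, β) (jpd (J.1 + 1 + α, J.2 + β) L) z := by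
      have hfun : varDer (J.1 + 1, J.2) L = fun w => ∑ p ∈ BW n,
          (-1 : ℝ)^(p.1 + p.2) * DI p (jpd (J.1 + 1 + p.1, J.2 + p.2) L) w := by
        funext w; exact varDer_eq_sum hL le_rfl _ w
      rw [hfun, TD1_sum fun p _ => ((smL.jpd _).di _).const_mul _]
      rw [← Finset.sum_product' (f := fun α β =>
        (-1 : ℝ)^(α + β) * DI (α + 1, β) (jpd (J.1 + 1 + α, J.2 + β) L) z)]
      refine Finset.sum_congr rfl fun p _ => ?_
      rw [TD1_const_mul _ ((smL.jpd _).di _), ← DI_succ1]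
    have hrest : ∑ α ∈ Finset.range n, h (α + 1)
        = - TD1 (varDer (J.1 + 1, J.2) L) z := by
      rw [hTD1, ← Finset.sum_neg_distrib]
      refine Finset.sum_congr rfl fun α _ => ?_
      rw [hh]
      simp only []
      rw [← Finset.sum_neg_distrib]
      refine Finset.sum_congr rfl fun β _ => ?_
      have e1 : J.1 + (α + 1) = J.1 + 1 + α := by omega
      rw [e1]
      have e2 : (-1 : ℝ)^(α + 1 + β) = -(-1 : ℝ)^(α + β) := by
        rw [show α + 1 + β = (α + β) + 1 by omega, pow_succ]
        ring
      rw [e2]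
      ring
    have hs2 : (Finset.range n).sum h = h 0 + ∑ a ∈ Finset.range n, h (a + 1) := hshift
    rw [hvd, hs2, h0eq, hrest]
    ring
  -- Step 2
  have step2 : ∀ J : ℕ × ℕ, ∀ z : Jet,
      jpd J L z = μ J z + TD2 (μ (J.1, J.2 + 1)) z := by
    intro J z
    set g : ℕ → ℝ := fun β => (-1 : ℝ)^β * DI (0, β) (jpd (J.1, J.2 + β) L) z with hg
    have hn0 : g n = 0 := by
      rw [hg]
      simp only []
      rw [hL.jpd_out (Or.inr (by omega)), DI_zero_fn]
      ring
    have hshift := sum_shift hn0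
    have h0eq : g 0 = jpd J L z := by
      rw [hg]
      simp only [pow_zero, one_mul, Nat.add_zero]
      have : (J.1, J.2) = J := rfl
      rw [this]
      rfl
    have hTD2 : TD2 (μ (J.1, J.2 + 1)) z
        = ∑ β ∈ Finset.range n,
            (-1 : ℝ)^β * DI (0, β + 1) (jpd (J.1, J.2 + 1 + β) L) z := by
      rw [hμ]
      rw [TD2_sum fun β _ => ((smL.jpd _).di _).const_mul _]
      refine Finset.sum_congr rfl fun β _ => ?_
      rw [TD2_const_mul _ ((smL.jpd _).di _), ← DI_zero_succ2]
    have hrest : ∑ β ∈ Finset.range n, g (β + 1) = - TD2 (μ (J.1, J.2 + 1)) z := by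
      rw [hTD2, ← Finset.sum_neg_distrib]
      refine Finset.sum_congr rfl fun β _ => ?_
      rw [hg]
      simp only []
      have e1 : J.2 + (β + 1) = J.2 + 1 + β := by omega
      rw [e1]
      rw [pow_succ]
      ring
    have : μ J z = g 0 + ∑ β ∈ Finset.range n, g (β + 1) := hshift
    rw [this, h0eq, hrest]
    ring
  -- combine
  funext z
  have e2 : μ (I.1, I.2 + 1) = fun w => varDer (I.1, I.2 + 1) L w
      + TD1 (varDer (I.1 + 1, I.2 + 1) L) w := by
    funext w
    have := step1 (I.1, I.2 + 1) w
    simp only [] at this ⊢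
    linarith [this]
  have e3 : TD2 (μ (I.1, I.2 + 1)) z
      = TD2 (varDer (I.1, I.2 + 1) L) z + TD2 (TD1 (varDer (I.1 + 1, I.2 + 1) L)) z := by
    rw [e2, TD2_add (sm_varDer smL _) ((sm_varDer smL _).td1)]
  have e1 : μ I z = varDer I L z + TD1 (varDer (I.1 + 1, I.2) L) z := by
    have := step1 I z
    linarith [this]
  rw [step2 I z, e1, e3]
  ring

theorem grand {n : ℕ} (q v0 v1 v2 v21 : ℕ → ℕ → ℝ)
    (hv0 : ∀ a b, n ≤ a ∨ n ≤ b → v0 a b = 0)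
    (hv1 : ∀ a b, n ≤ a ∨ n ≤ b → v1 a b = 0)
    (hv2 : ∀ a b, n ≤ a ∨ n ≤ b → v2 a b = 0) :
    ∑ a ∈ Finset.range n, ∑ b ∈ Finset.range n,
        q a b * (v0 a b + v1 (a+1) b + v2 a (b+1) + v21 (a+1) (b+1))
    = q 0 0 * v0 0 0
      + (∑ a ∈ Finset.range n, (q (a+1) 0 * v0 (a+1) 0 + q a 0 * v1 (a+1) 0))
      + (∑ b ∈ Finset.range n, (q 0 (b+1) * v0 0 (b+1) + q 0 b * v2 0 (b+1)))
      + ∑ a ∈ Finset.range n, ∑ b ∈ Finset.range n,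
          (q (a+1) (b+1) * v0 (a+1) (b+1) + q (a+1) b * v2 (a+1) (b+1)
            + q a (b+1) * v1 (a+1) (b+1) + q a b * v21 (a+1) (b+1)) := by
  -- split the LHS summand
  have hsplit : ∀ a b : ℕ,
      q a b * (v0 a b + v1 (a+1) b + v2 a (b+1) + v21 (a+1) (b+1))
      = q a b * v0 a b + q a b * v1 (a+1) b + q a b * v2 a (b+1)
        + q a b * v21 (a+1) (b+1) := fun a b => by ring
  have hLHS : ∑ a ∈ Finset.range n, ∑ b ∈ Finset.range n,
        q a b * (v0 a b + v1 (a+1) b + v2 a (b+1) + v21 (a+1) (b+1))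
      = (∑ a ∈ Finset.range n, ∑ b ∈ Finset.range n, q a b * v0 a b)
        + (∑ a ∈ Finset.range n, ∑ b ∈ Finset.range n, q a b * v1 (a+1) b)
        + (∑ a ∈ Finset.range n, ∑ b ∈ Finset.range n, q a b * v2 a (b+1))
        + (∑ a ∈ Finset.range n, ∑ b ∈ Finset.range n, q a b * v21 (a+1) (b+1)) := by
    rw [← Finset.sum_add_distrib, ← Finset.sum_add_distrib, ← Finset.sum_add_distrib]
    refine Finset.sum_congr rfl fun a _ => ?_
    rw [← Finset.sum_add_distrib, ← Finset.sum_add_distrib, ← Finset.sum_add_distrib]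
    exact Finset.sum_congr rfl fun b _ => hsplit a b
  -- T0
  have t0 : ∑ a ∈ Finset.range n, ∑ b ∈ Finset.range n, q a b * v0 a b
      = q 0 0 * v0 0 0 + (∑ b ∈ Finset.range n, q 0 (b+1) * v0 0 (b+1))
        + ((∑ a ∈ Finset.range n, q (a+1) 0 * v0 (a+1) 0)
          + ∑ a ∈ Finset.range n, ∑ b ∈ Finset.range n, q (a+1) (b+1) * v0 (a+1) (b+1)) := by
    have houter : ∑ a ∈ Finset.range n, (∑ b ∈ Finset.range n, q a b * v0 a b)
        = (∑ b ∈ Finset.range n, q 0 b * v0 0 b)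
          + ∑ a ∈ Finset.range n, (∑ b ∈ Finset.range n, q (a+1) b * v0 (a+1) b) :=
      sum_shift (Finset.sum_eq_zero fun b _ => by rw [hv0 n b (Or.inl le_rfl)]; ring)
    have hinner0 : ∑ b ∈ Finset.range n, q 0 b * v0 0 b
        = q 0 0 * v0 0 0 + ∑ b ∈ Finset.range n, q 0 (b+1) * v0 0 (b+1) :=
      sum_shift (by rw [hv0 0 n (Or.inr le_rfl)]; ring)
    have hinnera : ∀ a, ∑ b ∈ Finset.range n, q (a+1) b * v0 (a+1) b
        = q (a+1) 0 * v0 (a+1) 0 + ∑ b ∈ Finset.range n, q (a+1) (b+1) * v0 (a+1) (b+1) :=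
      fun a => sum_shift (by rw [hv0 (a+1) n (Or.inr le_rfl)]; ring)
    rw [houter, hinner0, Finset.sum_congr rfl fun a _ => hinnera a, Finset.sum_add_distrib]
  -- T1 : inner shift only
  have t1 : ∑ a ∈ Finset.range n, ∑ b ∈ Finset.range n, q a b * v1 (a+1) b
      = (∑ a ∈ Finset.range n, q a 0 * v1 (a+1) 0)
        + ∑ a ∈ Finset.range n, ∑ b ∈ Finset.range n, q a (b+1) * v1 (a+1) (b+1) := by
    have hinner : ∀ a, ∑ b ∈ Finset.range n, q a b * v1 (a+1) b
        = q a 0 * v1 (a+1) 0 + ∑ b ∈ Finset.range n, q a (b+1) * v1 (a+1) (b+1) :=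
      fun a => sum_shift (by rw [hv1 (a+1) n (Or.inr le_rfl)]; ring)
    rw [Finset.sum_congr rfl fun a _ => hinner a, Finset.sum_add_distrib]
  -- T2 : outer shift only
  have t2 : ∑ a ∈ Finset.range n, ∑ b ∈ Finset.range n, q a b * v2 a (b+1)
      = (∑ b ∈ Finset.range n, q 0 b * v2 0 (b+1))
        + ∑ a ∈ Finset.range n, ∑ b ∈ Finset.range n, q (a+1) b * v2 (a+1) (b+1) := by
    exact sum_shift (Finset.sum_eq_zero fun b _ => by rw [hv2 n (b+1) (Or.inl le_rfl)]; ring)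
  -- RHS fourth sum split
  have hRHS4 : ∑ a ∈ Finset.range n, ∑ b ∈ Finset.range n,
        (q (a+1) (b+1) * v0 (a+1) (b+1) + q (a+1) b * v2 (a+1) (b+1)
          + q a (b+1) * v1 (a+1) (b+1) + q a b * v21 (a+1) (b+1))
      = (∑ a ∈ Finset.range n, ∑ b ∈ Finset.range n, q (a+1) (b+1) * v0 (a+1) (b+1))
        + (∑ a ∈ Finset.range n, ∑ b ∈ Finset.range n, q (a+1) b * v2 (a+1) (b+1))
        + (∑ a ∈ Finset.range n, ∑ b ∈ Finset.range n, q a (b+1) * v1 (a+1) (b+1))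
        + (∑ a ∈ Finset.range n, ∑ b ∈ Finset.range n, q a b * v21 (a+1) (b+1)) := by
    rw [← Finset.sum_add_distrib, ← Finset.sum_add_distrib, ← Finset.sum_add_distrib]
    refine Finset.sum_congr rfl fun a _ => ?_
    rw [← Finset.sum_add_distrib, ← Finset.sum_add_distrib, ← Finset.sum_add_distrib]
  -- RHS second sum split
  have hRHS2 : ∑ a ∈ Finset.range n, (q (a+1) 0 * v0 (a+1) 0 + q a 0 * v1 (a+1) 0)
      = (∑ a ∈ Finset.range n, q (a+1) 0 * v0 (a+1) 0)
        + ∑ a ∈ Finset.range n, q a 0 * v1 (a+1) 0 := Finset.sum_add_distrib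
  have hRHS3 : ∑ b ∈ Finset.range n, (q 0 (b+1) * v0 0 (b+1) + q 0 b * v2 0 (b+1))
      = (∑ b ∈ Finset.range n, q 0 (b+1) * v0 0 (b+1))
        + ∑ b ∈ Finset.range n, q 0 b * v2 0 (b+1) := Finset.sum_add_distrib
  rw [hLHS, t0, t1, t2, hRHS4, hRHS2, hRHS3]
  ring

theorem main_identity {L Q : Jet → ℝ} {n : ℕ} (hnL : Cyl n L) (hQ : SmoothJetFun Q)
    (z : Jet) :
    prol Q L z
      = Q z * varDer (0, 0) L z
        + TD1 (fun w => ∑ a ∈ Finset.range n, DI (a, 0) Q w * varDer (a + 1, 0) L w) z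
        + TD2 (fun w => ∑ b ∈ Finset.range n, DI (0, b) Q w * varDer (0, b + 1) L w) z
        + TD2 (TD1 (fun w => ∑ a ∈ Finset.range n, ∑ b ∈ Finset.range n,
            DI (a, b) Q w * varDer (a + 1, b + 1) L w)) z := by
  have smL : SmoothJetFun L := smoothJetFun_iff.mpr ⟨n, hnL⟩
  have sdd : ∀ I : ℕ × ℕ, SmoothJetFun (varDer I L) := sm_varDer smL
  -- vanishing
  have hv0 : ∀ a b : ℕ, n ≤ a ∨ n ≤ b → varDer (a, b) L z = 0 := by
    intro a b h; rw [varDer_out hnL h]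
  have hv1 : ∀ a b : ℕ, n ≤ a ∨ n ≤ b → TD1 (varDer (a, b) L) z = 0 := by
    intro a b h; rw [varDer_out hnL h, TD1_zero]
  have hv2 : ∀ a b : ℕ, n ≤ a ∨ n ≤ b → TD2 (varDer (a, b) L) z = 0 := by
    intro a b h; rw [varDer_out hnL h, TD2_zero]
  -- LHS expansion
  have hprol : prol Q L z = ∑ a ∈ Finset.range n, ∑ b ∈ Finset.range n,
      DI (a, b) Q z * jpd (a, b) L z := by
    have h1 : prol Q L z = ∑ I ∈ BW n, DI I Q z * jpd I L z := by
      refine tsum_eq_sum fun I hI => ?_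
      rw [hnL.jpd_out (by rw [mem_BW] at hI; omega)]
      ring
    rw [h1, BW, Finset.sum_product]
  have hkey : ∀ a b : ℕ, jpd (a, b) L z
      = varDer (a, b) L z + TD1 (varDer (a + 1, b) L) z
        + TD2 (varDer (a, b + 1) L) z + TD2 (TD1 (varDer (a + 1, b + 1) L)) z :=
    fun a b => congrFun (keyK hnL (a, b)) z
  have hLHS : prol Q L z = ∑ a ∈ Finset.range n, ∑ b ∈ Finset.range n,
      DI (a, b) Q z * (varDer (a, b) L z + TD1 (varDer (a + 1, b) L) z
        + TD2 (varDer (a, b + 1) L) z + TD2 (TD1 (varDer (a + 1, b + 1) L)) z) := by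
    rw [hprol]
    exact Finset.sum_congr rfl fun a _ => Finset.sum_congr rfl fun b _ => by rw [hkey a b]
  -- grand
  have gr : ∑ a ∈ Finset.range n, ∑ b ∈ Finset.range n,
        DI (a, b) Q z * (varDer (a, b) L z + TD1 (varDer (a + 1, b) L) z
          + TD2 (varDer (a, b + 1) L) z + TD2 (TD1 (varDer (a + 1, b + 1) L)) z)
      = DI (0, 0) Q z * varDer (0, 0) L z
        + (∑ a ∈ Finset.range n, (DI (a + 1, 0) Q z * varDer (a + 1, 0) L z
            + DI (a, 0) Q z * TD1 (varDer (a + 1, 0) L) z))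
        + (∑ b ∈ Finset.range n, (DI (0, b + 1) Q z * varDer (0, b + 1) L z
            + DI (0, b) Q z * TD2 (varDer (0, b + 1) L) z))
        + ∑ a ∈ Finset.range n, ∑ b ∈ Finset.range n,
            (DI (a + 1, b + 1) Q z * varDer (a + 1, b + 1) L z
              + DI (a + 1, b) Q z * TD2 (varDer (a + 1, b + 1) L) z
              + DI (a, b + 1) Q z * TD1 (varDer (a + 1, b + 1) L) z
              + DI (a, b) Q z * TD2 (TD1 (varDer (a + 1, b + 1) L)) z) :=
    grand (fun a b => DI (a, b) Q z) (fun a b => varDer (a, b) L z)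
      (fun a b => TD1 (varDer (a, b) L) z) (fun a b => TD2 (varDer (a, b) L) z)
      (fun a b => TD2 (TD1 (varDer (a, b) L)) z) hv0 hv1 hv2
  -- RHS piece P
  have eP : TD1 (fun w => ∑ a ∈ Finset.range n, DI (a, 0) Q w * varDer (a + 1, 0) L w) z
      = ∑ a ∈ Finset.range n, (DI (a + 1, 0) Q z * varDer (a + 1, 0) L z
          + DI (a, 0) Q z * TD1 (varDer (a + 1, 0) L) z) := by
    rw [TD1_sum fun a _ => (hQ.di _).mul (sdd _)]
    refine Finset.sum_congr rfl fun a _ => ?_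
    have e : TD1 (fun w => DI (a, 0) Q w * varDer (a + 1, 0) L w) z
        = TD1 (DI (a, 0) Q) z * varDer (a + 1, 0) L z
          + DI (a, 0) Q z * TD1 (varDer (a + 1, 0) L) z :=
      congrFun (TD1_mul (hQ.di (a, 0)) (sdd _)) z
    rw [e, ← DI_succ1]
  -- RHS piece R
  have eR : TD2 (fun w => ∑ b ∈ Finset.range n, DI (0, b) Q w * varDer (0, b + 1) L w) z
      = ∑ b ∈ Finset.range n, (DI (0, b + 1) Q z * varDer (0, b + 1) L z
          + DI (0, b) Q z * TD2 (varDer (0, b + 1) L) z) := by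
    rw [TD2_sum fun b _ => (hQ.di _).mul (sdd _)]
    refine Finset.sum_congr rfl fun b _ => ?_
    have e : TD2 (fun w => DI (0, b) Q w * varDer (0, b + 1) L w) z
        = TD2 (DI (0, b) Q) z * varDer (0, b + 1) L z
          + DI (0, b) Q z * TD2 (varDer (0, b + 1) L) z :=
      congrFun (TD2_mul (hQ.di (0, b)) (sdd _)) z
    rw [e, ← DI_succ2 hQ]
  -- RHS piece S
  have hTS : TD1 (fun w => ∑ a ∈ Finset.range n, ∑ b ∈ Finset.range n,
        DI (a, b) Q w * varDer (a + 1, b + 1) L w)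
      = fun w => ∑ a ∈ Finset.range n, ∑ b ∈ Finset.range n,
          (DI (a + 1, b) Q w * varDer (a + 1, b + 1) L w
            + DI (a, b) Q w * TD1 (varDer (a + 1, b + 1) L) w) := by
    rw [TD1_sum fun a _ => sm_sum fun b _ => (hQ.di _).mul (sdd _)]
    funext w
    refine Finset.sum_congr rfl fun a _ => ?_
    rw [TD1_sum fun b _ => (hQ.di _).mul (sdd _)]
    refine Finset.sum_congr rfl fun b _ => ?_
    have e : TD1 (fun w' => DI (a, b) Q w' * varDer (a + 1, b + 1) L w') w
        = TD1 (DI (a, b) Q) w * varDer (a + 1, b + 1) L w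
          + DI (a, b) Q w * TD1 (varDer (a + 1, b + 1) L) w :=
      congrFun (TD1_mul (hQ.di (a, b)) (sdd _)) w
    rw [e, ← DI_succ1]
  have eS : TD2 (TD1 (fun w => ∑ a ∈ Finset.range n, ∑ b ∈ Finset.range n,
        DI (a, b) Q w * varDer (a + 1, b + 1) L w)) z
      = ∑ a ∈ Finset.range n, ∑ b ∈ Finset.range n,
          (DI (a + 1, b + 1) Q z * varDer (a + 1, b + 1) L z
            + DI (a + 1, b) Q z * TD2 (varDer (a + 1, b + 1) L) z
            + DI (a, b + 1) Q z * TD1 (varDer (a + 1, b + 1) L) z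
            + DI (a, b) Q z * TD2 (TD1 (varDer (a + 1, b + 1) L)) z) := by
    rw [hTS]
    rw [TD2_sum fun a _ => sm_sum fun b _ =>
      ((hQ.di _).mul (sdd _)).add ((hQ.di _).mul ((sdd _).td1))]
    refine Finset.sum_congr rfl fun a _ => ?_
    rw [TD2_sum fun b _ => ((hQ.di _).mul (sdd _)).add ((hQ.di _).mul ((sdd _).td1))]
    refine Finset.sum_congr rfl fun b _ => ?_
    have e1 : TD2 (fun w => DI (a + 1, b) Q w * varDer (a + 1, b + 1) L w
          + DI (a, b) Q w * TD1 (varDer (a + 1, b + 1) L) w) z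
        = TD2 (fun w => DI (a + 1, b) Q w * varDer (a + 1, b + 1) L w) z
          + TD2 (fun w => DI (a, b) Q w * TD1 (varDer (a + 1, b + 1) L) w) z :=
      congrFun (TD2_add ((hQ.di _).mul (sdd _)) ((hQ.di _).mul ((sdd _).td1))) z
    have e2 : TD2 (fun w => DI (a + 1, b) Q w * varDer (a + 1, b + 1) L w) z
        = TD2 (DI (a + 1, b) Q) z * varDer (a + 1, b + 1) L z
          + DI (a + 1, b) Q z * TD2 (varDer (a + 1, b + 1) L) z :=
      congrFun (TD2_mul (hQ.di (a + 1, b)) (sdd _)) z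
    have e3 : TD2 (fun w => DI (a, b) Q w * TD1 (varDer (a + 1, b + 1) L) w) z
        = TD2 (DI (a, b) Q) z * TD1 (varDer (a + 1, b + 1) L) z
          + DI (a, b) Q z * TD2 (TD1 (varDer (a + 1, b + 1) L)) z :=
      congrFun (TD2_mul (hQ.di (a, b)) ((sdd _).td1)) z
    rw [e1, e2, e3, ← DI_succ2 hQ, ← DI_succ2 hQ]
    ring
  have hq00 : DI (0, 0) Q z = Q z := by rw [DI_zero_zero]
  rw [hLHS, gr, hq00, eP, eR, eS]


/-- Noether's theorem: the algebraic identity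
`pr(Q∂ᵤ)L = Q·(δL/δu) + D₁(J₁ + F₁) + D₂(J₂ + F₂)` holds; consequently `Q∂ᵤ` is a
variational symmetry of `L` with flux `(F₁,F₂)` if and only if `(J₁, J₂, Q)` is a
conservation law of `L`. -/
theorem stmt9 (L Q F1 F2 : Jet → ℝ)
    (hL : SmoothJetFun L) (hQ : SmoothJetFun Q)
    (hF1 : SmoothJetFun F1) (hF2 : SmoothJetFun F2) :
    (∀ z : Jet, prol Q L z
        = Q z * varDer (0, 0) L z
          + TD1 (fun w => J1 L Q F1 w + F1 w) z
          + TD2 (fun w => J2 L Q F2 w + F2 w) z)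
    ∧ ((∀ z : Jet, prol Q L z = TD1 F1 z + TD2 F2 z)
        ↔ (∀ z : Jet, TD1 (J1 L Q F1) z + TD2 (J2 L Q F2) z
            = -(Q z * varDer (0, 0) L z))) := by
  obtain ⟨n, hnL⟩ := smoothJetFun_iff.mp hL
  have sdd : ∀ I : ℕ × ℕ, SmoothJetFun (varDer I L) := sm_varDer hL
  set Pf : Jet → ℝ := fun w => ∑ a ∈ Finset.range n, DI (a, 0) Q w * varDer (a + 1, 0) L w
    with hPf
  set Rf : Jet → ℝ := fun w => ∑ b ∈ Finset.range n, DI (0, b) Q w * varDer (0, b + 1) L w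
    with hRf
  set Sf : Jet → ℝ := fun w => ∑ a ∈ Finset.range n, ∑ b ∈ Finset.range n,
    DI (a, b) Q w * varDer (a + 1, b + 1) L w with hSf
  have smP : SmoothJetFun Pf := sm_sum fun a _ => (hQ.di _).mul (sdd _)
  have smR : SmoothJetFun Rf := sm_sum fun b _ => (hQ.di _).mul (sdd _)
  have smS : SmoothJetFun Sf := sm_sum fun a _ => sm_sum fun b _ => (hQ.di _).mul (sdd _)
  -- tsum reductions
  have eA : ∀ w : Jet, (∑' a : ℕ, DI (a, 0) Q w * varDer (a + 1, 0) L w) = Pf w := by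
    intro w
    refine tsum_eq_sum fun a ha => ?_
    rw [Finset.mem_range, not_lt] at ha
    rw [varDer_out hnL (Or.inl (by omega))]
    ring
  have eB : ∀ w : Jet, (∑' b : ℕ, DI (0, b) Q w * varDer (0, b + 1) L w) = Rf w := by
    intro w
    refine tsum_eq_sum fun b hb => ?_
    rw [Finset.mem_range, not_lt] at hb
    rw [varDer_out hnL (Or.inr (by omega))]
    ring
  have eSt : (fun w => ∑' I : ℕ × ℕ, DI I Q w * varDer (I.1 + 1, I.2 + 1) L w) = Sf := by
    funext w
    have h1 : (∑' I : ℕ × ℕ, DI I Q w * varDer (I.1 + 1, I.2 + 1) L w)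
        = ∑ I ∈ BW n, DI I Q w * varDer (I.1 + 1, I.2 + 1) L w := by
      refine tsum_eq_sum fun I hI => ?_
      rw [mem_BW] at hI
      rw [varDer_out hnL (by omega)]
      ring
    rw [h1, BW, Finset.sum_product]
  -- J-function rewrites
  have hJ1F : (fun w => J1 L Q F1 w + F1 w) = fun w => Pf w + (1/2) * TD2 Sf w := by
    funext w
    simp only [J1]
    rw [eA w, eSt]
    ring
  have hJ2F : (fun w => J2 L Q F2 w + F2 w) = fun w => Rf w + (1/2) * TD1 Sf w := by
    funext w
    simp only [J2]
    rw [eB w, eSt]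
    ring
  have hcomm : TD1 (TD2 Sf) = TD2 (TD1 Sf) := TD12_comm smS
  have hT1 : ∀ z, TD1 (fun w => J1 L Q F1 w + F1 w) z
      = TD1 Pf z + (1/2) * TD2 (TD1 Sf) z := by
    intro z
    rw [hJ1F]
    have h1 : TD1 (fun w => Pf w + (1/2) * TD2 Sf w) z
        = TD1 Pf z + TD1 (fun w => (1/2 : ℝ) * TD2 Sf w) z :=
      congrFun (TD1_add smP (SmoothJetFun.const_mul (1/2) smS.td2)) z
    have h2 : TD1 (fun w => (1/2 : ℝ) * TD2 Sf w) z = (1/2) * TD1 (TD2 Sf) z :=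
      congrFun (TD1_const_mul (1/2) smS.td2) z
    rw [h1, h2, hcomm]
  have hT2 : ∀ z, TD2 (fun w => J2 L Q F2 w + F2 w) z
      = TD2 Rf z + (1/2) * TD2 (TD1 Sf) z := by
    intro z
    rw [hJ2F]
    have h1 : TD2 (fun w => Rf w + (1/2) * TD1 Sf w) z
        = TD2 Rf z + TD2 (fun w => (1/2 : ℝ) * TD1 Sf w) z :=
      congrFun (TD2_add smR (SmoothJetFun.const_mul (1/2) smS.td1)) z
    have h2 : TD2 (fun w => (1/2 : ℝ) * TD1 Sf w) z = (1/2) * TD2 (TD1 Sf) z :=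
      congrFun (TD2_const_mul (1/2) smS.td1) z
    rw [h1, h2]
  have first : ∀ z : Jet, prol Q L z
      = Q z * varDer (0, 0) L z
        + TD1 (fun w => J1 L Q F1 w + F1 w) z
        + TD2 (fun w => J2 L Q F2 w + F2 w) z := by
    intro z
    rw [hT1 z, hT2 z]
    have hm := main_identity hnL hQ z
    rw [hPf, hRf, hSf]
    linarith [hm]
  refine ⟨first, ?_⟩
  -- pointwise formulas for TD1 J1, TD2 J2
  have hJ1' : J1 L Q F1 = fun w => (Pf w + (1/2) * TD2 Sf w) + (-1) * F1 w := by
    funext w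
    simp only [J1]
    rw [eA w, eSt]
    ring
  have hJ2' : J2 L Q F2 = fun w => (Rf w + (1/2) * TD1 Sf w) + (-1) * F2 w := by
    funext w
    simp only [J2]
    rw [eB w, eSt]
    ring
  have hTJ1 : ∀ z, TD1 (J1 L Q F1) z
      = (TD1 Pf z + (1/2) * TD2 (TD1 Sf) z) + (-1) * TD1 F1 z := by
    intro z
    rw [hJ1']
    have h1 : TD1 (fun w => (Pf w + (1/2) * TD2 Sf w) + (-1) * F1 w) z
        = TD1 (fun w => Pf w + (1/2) * TD2 Sf w) z
          + TD1 (fun w => (-1 : ℝ) * F1 w) z :=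
      congrFun (TD1_add (smP.add (SmoothJetFun.const_mul (1/2) smS.td2))
        (SmoothJetFun.const_mul (-1) hF1)) z
    have h2 : TD1 (fun w => Pf w + (1/2) * TD2 Sf w) z
        = TD1 Pf z + TD1 (fun w => (1/2 : ℝ) * TD2 Sf w) z :=
      congrFun (TD1_add smP (SmoothJetFun.const_mul (1/2) smS.td2)) z
    have h3 : TD1 (fun w => (1/2 : ℝ) * TD2 Sf w) z = (1/2) * TD1 (TD2 Sf) z :=
      congrFun (TD1_const_mul (1/2) smS.td2) z
    have h4 : TD1 (fun w => (-1 : ℝ) * F1 w) z = (-1) * TD1 F1 z :=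
      congrFun (TD1_const_mul (-1) hF1) z
    rw [h1, h2, h3, h4, hcomm]
  have hTJ2 : ∀ z, TD2 (J2 L Q F2) z
      = (TD2 Rf z + (1/2) * TD2 (TD1 Sf) z) + (-1) * TD2 F2 z := by
    intro z
    rw [hJ2']
    have h1 : TD2 (fun w => (Rf w + (1/2) * TD1 Sf w) + (-1) * F2 w) z
        = TD2 (fun w => Rf w + (1/2) * TD1 Sf w) z
          + TD2 (fun w => (-1 : ℝ) * F2 w) z :=
      congrFun (TD2_add (smR.add (SmoothJetFun.const_mul (1/2) smS.td1))
        (SmoothJetFun.const_mul (-1) hF2)) z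
    have h2 : TD2 (fun w => Rf w + (1/2) * TD1 Sf w) z
        = TD2 Rf z + TD2 (fun w => (1/2 : ℝ) * TD1 Sf w) z :=
      congrFun (TD2_add smR (SmoothJetFun.const_mul (1/2) smS.td1)) z
    have h3 : TD2 (fun w => (1/2 : ℝ) * TD1 Sf w) z = (1/2) * TD2 (TD1 Sf) z :=
      congrFun (TD2_const_mul (1/2) smS.td1) z
    have h4 : TD2 (fun w => (-1 : ℝ) * F2 w) z = (-1) * TD2 F2 z :=
      congrFun (TD2_const_mul (-1) hF2) z
    rw [h1, h2, h3, h4]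
  constructor
  · intro hsym z
    have e1 := first z
    have e2 := hT1 z
    have e3 := hT2 z
    have e4 := hTJ1 z
    have e5 := hTJ2 z
    have e6 := hsym z
    linarith
  · intro hcons z
    have e1 := first z
    have e2 := hT1 z
    have e3 := hT2 z
    have e4 := hTJ1 z
    have e5 := hTJ2 z
    have e6 := hcons z
    linarith
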